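/- Let G be the discrete Heisenberg group of 3×3 upper unitriangular integer matrices, generated by S = (s_1 = X, s_2 = Y, s_3 = Z^5) where X, Y are the elementary matrices with a 1 in positions (1,2) and (2,3) respectively and Z has a 1 in position (1,3). Assign weights w_1 = 1, w_2 = 3/2, w_3 = 3 and let G^𝔴_j be the subgroup generated by images of formal commutators of weight ≥ w̄_j, where w̄_1 = 1, w̄_2 = 3/2, w̄_3 = 2, w̄_4 = 5/2, w̄_5 = 3, w̄_6 = 7/2 are the first weight values. Then: G^𝔴_6 = {e}; G^𝔴_5 = ⟨Z^5⟩ ≅ ℤ; G^𝔴_4 = G^𝔴_3 = ⟨Z⟩ (the full center, ≅ ℤ); G^𝔴_2 = ⟨Y, Z⟩ ≅ ℤ²; G^𝔴_1 = G. Consequently the torsion-free ranks of successive quotients are 1, 1, 0, 0, 1 (for j = 1,...,5), G^𝔴_4/G^𝔴_5 ≅ ℤ/5ℤ, and D(S,𝔴) = Σ_j w̄_j · rank(G^𝔴_j/G^𝔴_{j+1}) = 1 + 3/2 + 3 = 11/2. -/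

import Mathlib

/-!
In the Heisenberg group every commutator is central, `⁅g, h⁆ = Z ^ (g.x * h.y - h.x * g.y)`, so a
formal commutator that is not a single letter has trivial image unless it is a commutator of
`X^±1` with `Y^±1`, whose image is `Z^±1` and whose weight is `5/2`. Hence `G^𝔴(t)` is generated by
those of `X, Y, Z, Z⁵` whose weights `1, 3/2, 5/2, 3` are at least `t`. The weight values are the
half-integers `≥ 1`, and the successive quotients of the filtration are `ℤ, ℤ, 1, ℤ/5, ℤ`, so only
the levels `1, 3/2, 3` contribute to `D(S,𝔴)`.
-/

/-- The discrete Heisenberg group: triples `(x,y,z)` of integers representing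
the unitriangular matrix with superdiagonal entries `x, y` and corner `z`. -/
@[ext] structure Heis : Type where
  x : ℤ
  y : ℤ
  z : ℤ
  deriving DecidableEq

namespace Heis

instance : Mul Heis := ⟨fun a b => ⟨a.x + b.x, a.y + b.y, a.z + b.z + a.x * b.y⟩⟩
instance : One Heis := ⟨⟨0, 0, 0⟩⟩
instance : Inv Heis := ⟨fun a => ⟨-a.x, -a.y, -a.z + a.x * a.y⟩⟩

lemma mul_def (a b : Heis) :
    a * b = ⟨a.x + b.x, a.y + b.y, a.z + b.z + a.x * b.y⟩ := rfl
lemma one_def : (1 : Heis) = ⟨0, 0, 0⟩ := rfl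
lemma inv_def (a : Heis) : a⁻¹ = ⟨-a.x, -a.y, -a.z + a.x * a.y⟩ := rfl

instance : Group Heis where
  mul_assoc a b c := by
    simp only [mul_def, mk.injEq]; refine ⟨by ring, by ring, by ring⟩
  one_mul a := by simp [mul_def, one_def]
  mul_one a := by simp [mul_def, one_def]
  inv_mul_cancel a := by
    simp only [mul_def, inv_def, one_def, mk.injEq]
    refine ⟨by ring, by ring, by ring⟩

/-- Generators: `X`, `Y`, `Z`. -/
def X : Heis := ⟨1, 0, 0⟩
def Y : Heis := ⟨0, 1, 0⟩
def Z : Heis := ⟨0, 0, 1⟩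

end Heis

/-- Formal commutators over a `k`-letter alphabet with signs. -/
inductive FC (k : ℕ) : Type
  | gen : Fin k → Bool → FC k
  | comm : FC k → FC k → FC k
  deriving DecidableEq

namespace FC

variable {k : ℕ}

/-- Weight of a formal commutator. -/
def weight (w : Fin k → ℝ) : FC k → ℝ
  | gen i _ => w i
  | comm a b => weight w a + weight w b

open scoped commutatorElement in
/-- Image of a formal commutator in a group. -/
def image {G : Type*} [Group G] (S : Fin k → G) : FC k → G
  | gen i b => if b then S i else (S i)⁻¹
  | comm a b => ⁅image S a, image S b⁆

end FC

/-- The subgroup generated by images of all formal commutators of weight `≥ t`. -/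
def weightSubgroup {k : ℕ} {G : Type*} [Group G] (S : Fin k → G) (w : Fin k → ℝ)
    (t : ℝ) : Subgroup G :=
  Subgroup.closure { g | ∃ c : FC k, t ≤ FC.weight w c ∧ FC.image S c = g }

/-- The torsion-free rank of `A/B` for subgroups `B ≤ A`: the largest size of a
family of elements of `A` that is free modulo `B`. -/
noncomputable def tfRank {G : Type*} [Group G] (A B : Subgroup G) : ℕ :=
  sSup { n : ℕ | ∃ f : Fin n → G, (∀ i, f i ∈ A) ∧
    ∀ x : Fin n → ℤ, (List.ofFn (fun i => f i ^ x i)).prod ∈ B → ∀ i, x i = 0 }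

/-- The set of weight values of the weight system. -/
def weightVals {k : ℕ} (w : Fin k → ℝ) : Set ℝ :=
  Set.range (FC.weight w)

/-- The next weight value after `t`. -/
noncomputable def nextVal {k : ℕ} (w : Fin k → ℝ) (t : ℝ) : ℝ :=
  sInf { x ∈ weightVals w | t < x }

/-- `D(S,𝔴) = Σ_j w̄_j rank(G^𝔴_j/G^𝔴_{j+1})`, summed over the weight values. -/
noncomputable def Dval {k : ℕ} {G : Type*} [Group G] (S : Fin k → G)
    (w : Fin k → ℝ) : ℝ :=
  ∑' t : (weightVals w), (t : ℝ) *
    (tfRank (weightSubgroup S w t) (weightSubgroup S w (nextVal w t)) : ℝ)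

open Subgroup Function
open scoped commutatorElement

section TorsionFreeRank

variable {G : Type*} [Group G] {A B : Subgroup G}

lemma tfRank_eq_zero_of_zpow_mem {k : ℤ} (hk : k ≠ 0) (h : ∀ g ∈ A, g ^ k ∈ B) :
    tfRank A B = 0 := by
  refine IsGreatest.csSup_eq ⟨⟨Fin.elim0, fun i => i.elim0, fun _ _ i => i.elim0⟩, ?_⟩
  rintro n ⟨f, hfA, hfree⟩
  by_contra hn
  let i₀ : Fin n := ⟨0, by omega⟩
  have hprod : (List.ofFn fun i => f i ^ (Pi.single i₀ k : Fin n → ℤ) i).prod ∈ B := by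
    refine list_prod_mem (List.forall_mem_ofFn_iff.mpr fun i => ?_)
    by_cases hi : i = i₀
    · subst hi
      simpa using h _ (hfA i₀)
    · simp [hi]
  exact hk (by simpa using hfree _ hprod i₀)

lemma tfRank_eq_zero_of_le (h : A ≤ B) : tfRank A B = 0 :=
  tfRank_eq_zero_of_zpow_mem one_ne_zero fun g hg => by simpa using h hg

lemma toAdd_map_list_prod_ofFn {n : ℕ} (φ : A →* Multiplicative ℤ) (f : Fin n → A)
    (x : Fin n → ℤ) :
    (φ (List.ofFn fun i => f i ^ x i).prod).toAdd =
      Fintype.linearCombination ℤ (fun i => (φ (f i)).toAdd) x := by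
  simp [map_list_prod, List.map_ofFn, List.prod_ofFn, toAdd_prod,
    Fintype.linearCombination_apply]

lemma tfRank_eq_one_of_surjective (φ : A →* Multiplicative ℤ) (hφ : Surjective φ)
    (hker : φ.ker = B.subgroupOf A) : tfRank A B = 1 := by
  refine IsGreatest.csSup_eq ⟨?_, ?_⟩
  · obtain ⟨g, hg⟩ := hφ (Multiplicative.ofAdd 1)
    refine ⟨fun _ => g, fun _ => g.2, fun x hx i => ?_⟩
    have : g ^ x 0 ∈ φ.ker := by
      rw [hker, mem_subgroupOf]
      simpa using hx
    fin_cases i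
    simpa [hg, ← ofAdd_zsmul] using this
  · rintro n ⟨f, hfA, hfree⟩
    let f' : Fin n → A := fun i => ⟨f i, hfA i⟩
    have hinj : Injective (Fintype.linearCombination ℤ fun i => (φ (f' i)).toAdd) := by
      refine (injective_iff_map_eq_zero _).mpr fun x hx => funext fun i => hfree x ?_ i
      have : (List.ofFn fun i => f' i ^ x i).prod ∈ φ.ker := by
        rw [MonoidHom.mem_ker, ← toAdd_eq_zero, toAdd_map_list_prod_ofFn, hx]
      rw [hker, mem_subgroupOf, val_list_prod] at this
      simpa [List.map_ofFn, Function.comp_def, f'] using this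
    simpa using LinearMap.finrank_le_finrank_of_injective hinj

end TorsionFreeRank

section WeightFiltration

variable {k : ℕ} {G : Type*} [Group G] (S : Fin k → G) (w : Fin k → ℝ)

lemma weightSubgroup_le {t : ℝ} {H : Subgroup G} (hgen : ∀ i, t ≤ w i → S i ∈ H)
    (hcomm : ∀ a b : FC k, t ≤ (FC.comm a b).weight w → (FC.comm a b).image S ∈ H) :
    weightSubgroup S w t ≤ H := by
  rw [weightSubgroup, closure_le]
  rintro _ ⟨⟨i, _ | _⟩ | ⟨a, b⟩, hc, rfl⟩
  · exact inv_mem (hgen i hc)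
  · exact hgen i hc
  · exact hcomm a b hc

lemma generator_mem_weightSubgroup {t : ℝ} {i : Fin k} (h : t ≤ w i) :
    S i ∈ weightSubgroup S w t :=
  subset_closure ⟨FC.gen i true, h, rfl⟩

lemma commutator_mem_weightSubgroup {t : ℝ} {i j : Fin k} (h : t ≤ w i + w j) :
    ⁅S i, S j⁆ ∈ weightSubgroup S w t :=
  subset_closure ⟨FC.comm (FC.gen i true) (FC.gen j true), h, rfl⟩

lemma nextVal_eq {t t' : ℝ} (ht' : t' ∈ weightVals w) (hlt : t < t')
    (hmin : ∀ x ∈ weightVals w, t < x → t' ≤ x) : nextVal w t = t' :=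
  IsLeast.csInf_eq ⟨⟨ht', hlt⟩, fun x hx => hmin x hx.1 hx.2⟩

lemma Dval_eq_sum (T : Finset ℝ) (hT : ∀ t ∈ T, t ∈ weightVals w)
    (hzero : ∀ t ∈ weightVals w, t ∉ T →
      tfRank (weightSubgroup S w t) (weightSubgroup S w (nextVal w t)) = 0) :
    Dval S w = ∑ t ∈ T, t *
      (tfRank (weightSubgroup S w t) (weightSubgroup S w (nextVal w t)) : ℝ) := by
  rw [Dval, tsum_subtype (weightVals w) fun t =>
    t * (tfRank (weightSubgroup S w t) (weightSubgroup S w (nextVal w t)) : ℝ),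
    tsum_eq_sum (s := T)]
  · exact Finset.sum_congr rfl fun t ht => Set.indicator_of_mem (hT t ht) _
  · intro t ht
    by_cases hw : t ∈ weightVals w
    · simp [Set.indicator_of_mem hw, hzero t hw ht]
    · exact Set.indicator_of_notMem hw _

end WeightFiltration

section InfiniteCyclic

variable {G : Type*} [Group G] {g : G}

lemma injective_zpowersHom (hg : ¬IsOfFinOrder g) : Injective (zpowersHom G g) :=
  fun a b h => Multiplicative.toAdd.injective
    (injective_zpow_iff_not_isOfFinOrder.mpr hg (by simpa using h))

noncomputable def zpowersEquivInt (hg : ¬IsOfFinOrder g) : zpowers g ≃* Multiplicative ℤ :=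
  (MulEquiv.subgroupCongr (range_zpowersHom g).symm).trans
    (MonoidHom.ofInjective (injective_zpowersHom hg)).symm

lemma zpowersEquivInt_zpow (hg : ¬IsOfFinOrder g) (m : ℤ) :
    zpowersEquivInt hg ⟨g ^ m, m, rfl⟩ = Multiplicative.ofAdd m := by
  rw [zpowersEquivInt, MulEquiv.trans_apply, MulEquiv.symm_apply_eq]
  exact Subtype.ext (by simp [MonoidHom.ofInjective_apply])

lemma exists_bijective_of_eq_zpowers {H : Subgroup G} (hH : H = zpowers g)
    (hg : ¬IsOfFinOrder g) : ∃ φ : H →* Multiplicative ℤ, Bijective φ := by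
  subst hH
  exact ⟨zpowersEquivInt hg, (zpowersEquivInt hg).bijective⟩

lemma zpow_mem_zpowers_pow_iff (hg : ¬IsOfFinOrder g) {m : ℤ} {n : ℕ} :
    g ^ m ∈ zpowers (g ^ n) ↔ (n : ℤ) ∣ m := by
  have hinj := injective_zpow_iff_not_isOfFinOrder.mpr hg
  simp only [mem_zpowers_iff, ← zpow_natCast, ← zpow_mul]
  exact exists_congr fun _ => hinj.eq_iff.trans eq_comm

lemma exists_surjective_zmod_of_eq_zpowers {H K : Subgroup G} {n : ℕ} (hH : H = zpowers g)
    (hK : K = zpowers (g ^ n)) (hg : ¬IsOfFinOrder g) :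
    ∃ φ : H →* Multiplicative (ZMod n), Surjective φ ∧ φ.ker = K.subgroupOf H := by
  subst hH hK
  refine ⟨(Int.castAddHom (ZMod n)).toMultiplicative.comp (zpowersEquivInt hg).toMonoidHom,
    (ZMod.intCast_surjective.comp (zpowersEquivInt hg).surjective), ?_⟩
  ext ⟨_, m, rfl⟩
  rw [MonoidHom.mem_ker, MonoidHom.comp_apply, MulEquiv.coe_toMonoidHom, zpowersEquivInt_zpow,
    mem_subgroupOf, zpow_mem_zpowers_pow_iff hg]
  exact ofAdd_eq_one.trans (ZMod.intCast_zmod_eq_zero_iff_dvd m n)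

end InfiniteCyclic

namespace Heis

lemma zpow_mk_of_mul_eq_zero {a b c : ℤ} (h : a * b = 0) (n : ℤ) :
    (⟨a, b, c⟩ : Heis) ^ n = ⟨n * a, n * b, n * c⟩ := by
  induction n using Int.induction_on with
  | zero => simp [one_def]
  | succ n ih =>
    rw [zpow_add_one, ih, mul_def, mk.injEq]
    exact ⟨by ring, by ring, by linear_combination (n : ℤ) * h⟩
  | pred n ih =>
    rw [zpow_sub_one, ih, inv_def, mul_def, mk.injEq]
    exact ⟨by ring, by ring, by linear_combination ((n : ℤ) + 1) * h⟩

@[simp] lemma X_zpow (n : ℤ) : X ^ n = ⟨n, 0, 0⟩ := by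
  simpa [X] using zpow_mk_of_mul_eq_zero (c := 0) (mul_zero 1) n

@[simp] lemma Y_zpow (n : ℤ) : Y ^ n = ⟨0, n, 0⟩ := by
  simpa [Y] using zpow_mk_of_mul_eq_zero (c := 0) (zero_mul 1) n

@[simp] lemma Z_zpow (n : ℤ) : Z ^ n = ⟨0, 0, n⟩ := by
  simpa [Z] using zpow_mk_of_mul_eq_zero (c := 1) (zero_mul 0) n

lemma mk_eq_X_zpow_mul_Y_zpow_mul_Z_zpow (a b c : ℤ) :
    (⟨a, b, c⟩ : Heis) = X ^ a * Y ^ b * Z ^ (c - a * b) := by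
  simp only [X_zpow, Y_zpow, Z_zpow, mul_def]
  ext <;> dsimp only <;> ring

lemma commutator_eq (g h : Heis) : ⁅g, h⁆ = ⟨0, 0, g.x * h.y - h.x * g.y⟩ := by
  rw [commutatorElement_def, mul_def, mul_def, mul_def, inv_def, inv_def]
  ext <;> dsimp only <;> ring

lemma commutator_X_Y : ⁅X, Y⁆ = Z := by
  rw [commutator_eq]; rfl

lemma not_isOfFinOrder_Z : ¬IsOfFinOrder Z := by
  rw [← injective_zpow_iff_not_isOfFinOrder]
  intro m n h
  simpa using h

lemma mem_closure_Z_iff {g : Heis} : g ∈ closure {Z} ↔ g.x = 0 ∧ g.y = 0 := by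
  rw [mem_closure_singleton]
  constructor
  · rintro ⟨n, rfl⟩
    simp
  · rintro ⟨hx, hy⟩
    exact ⟨g.z, by ext <;> simp [hx, hy]⟩

lemma mem_closure_Y_Z_iff {g : Heis} : g ∈ closure {Y, Z} ↔ g.x = 0 := by
  constructor
  · intro hg
    refine closure_induction (p := fun g _ => g.x = 0) ?_ rfl ?_ ?_ hg
    · rintro _ (rfl | rfl) <;> rfl
    · intro a b _ _ ha hb
      simp [mul_def, ha, hb]
    · intro a _ ha
      simp [inv_def, ha]
  · intro hx
    rw [show g = ⟨0, g.y, g.z⟩ from Heis.ext hx rfl rfl, mk_eq_X_zpow_mul_Y_zpow_mul_Z_zpow,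
      zpow_zero, one_mul]
    exact mul_mem (zpow_mem (subset_closure (by simp)) _) (zpow_mem (subset_closure (by simp)) _)

lemma commutator_mem_closure_Z (g h : Heis) : ⁅g, h⁆ ∈ closure {Z} := by
  simp [mem_closure_Z_iff, commutator_eq]

lemma commutator_eq_one_of_mem_closure_Z_left {g : Heis} (hg : g ∈ closure {Z}) (h : Heis) :
    ⁅g, h⁆ = 1 := by
  obtain ⟨hx, hy⟩ := mem_closure_Z_iff.mp hg
  simp [commutator_eq, hx, hy, one_def]

lemma commutator_eq_one_of_mem_closure_Z_right (g : Heis) {h : Heis} (hh : h ∈ closure {Z}) :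
    ⁅g, h⁆ = 1 := by
  obtain ⟨hx, hy⟩ := mem_closure_Z_iff.mp hh
  simp [commutator_eq, hx, hy, one_def]

def xCoord : Heis →* Multiplicative ℤ where
  toFun g := Multiplicative.ofAdd g.x
  map_one' := rfl
  map_mul' _ _ := rfl

def yCoord : Heis →* Multiplicative ℤ where
  toFun g := Multiplicative.ofAdd g.y
  map_one' := rfl
  map_mul' _ _ := rfl

lemma xCoord_surjective : Surjective xCoord := fun n => ⟨⟨n.toAdd, 0, 0⟩, rfl⟩

lemma ker_xCoord : xCoord.ker = closure {Y, Z} := by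
  ext g
  rw [MonoidHom.mem_ker, mem_closure_Y_Z_iff]
  exact ofAdd_eq_one

end Heis

section HeisenbergWeightFiltration

open Heis FC

local notation "𝔰" => (![X, Y, Z ^ 5] : Fin 3 → Heis)
local notation "𝔴" => (![1, 3 / 2, 3] : Fin 3 → ℝ)

lemma weight_eq_half (c : FC 3) : ∃ m : ℕ, 2 ≤ m ∧ c.weight 𝔴 = m / 2 := by
  induction c with
  | gen i b =>
    fin_cases i
    · exact ⟨2, le_rfl, by norm_num [weight]⟩
    · exact ⟨3, by norm_num, by norm_num [weight]⟩
    · exact ⟨6, by norm_num, by norm_num [weight]⟩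
  | comm a b iha ihb =>
    obtain ⟨m, hm, ha⟩ := iha
    obtain ⟨l, hl, hb⟩ := ihb
    exact ⟨m + l, by omega, by rw [weight, ha, hb]; push_cast; ring⟩

lemma half_mem_weightVals : ∀ m : ℕ, 2 ≤ m → (m / 2 : ℝ) ∈ weightVals 𝔴
  | 0, h | 1, h => absurd h (by norm_num)
  | 2, _ => ⟨gen 0 true, by norm_num [weight]⟩
  | 3, _ => ⟨gen 1 true, by norm_num [weight]⟩
  | m + 4, _ => by
    obtain ⟨c, hc⟩ := half_mem_weightVals (m + 2) (by omega)
    exact ⟨comm (gen 0 true) c, by norm_num [weight, hc]; ring⟩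

lemma nextVal_half {m : ℕ} (hm : 2 ≤ m) : nextVal 𝔴 (m / 2) = (m + 1) / 2 := by
  refine nextVal_eq 𝔴 (by exact_mod_cast half_mem_weightVals (m + 1) (by omega))
    (by linarith) ?_
  rintro _ ⟨c, rfl⟩ hc
  obtain ⟨l, -, hl⟩ := weight_eq_half c
  rw [hl] at hc ⊢
  have hml : m < l := by exact_mod_cast (show (m : ℝ) < l by linarith)
  have : (m : ℝ) + 1 ≤ l := by exact_mod_cast hml
  linarith

lemma image_comm_eq_one {a b : FC 3} (h : (comm a b).weight 𝔴 ≠ 5 / 2) :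
    (comm a b).image 𝔰 = 1 := by
  cases a with
  | comm a₁ a₂ => exact commutator_eq_one_of_mem_closure_Z_left (commutator_mem_closure_Z _ _) _
  | gen i β =>
    cases b with
    | comm b₁ b₂ =>
      exact commutator_eq_one_of_mem_closure_Z_right _ (commutator_mem_closure_Z _ _)
    | gen j γ =>
      fin_cases i <;> fin_cases j <;> norm_num [weight] at h <;> revert β γ <;> decide

variable {t : ℝ}

lemma X_mem_weightSubgroup (ht : t ≤ 1) : X ∈ weightSubgroup 𝔰 𝔴 t :=
  generator_mem_weightSubgroup 𝔰 𝔴 (i := 0) ht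

lemma Y_mem_weightSubgroup (ht : t ≤ 3 / 2) : Y ∈ weightSubgroup 𝔰 𝔴 t :=
  generator_mem_weightSubgroup 𝔰 𝔴 (i := 1) ht

lemma Z_pow_five_mem_weightSubgroup (ht : t ≤ 3) : Z ^ 5 ∈ weightSubgroup 𝔰 𝔴 t :=
  generator_mem_weightSubgroup 𝔰 𝔴 (i := 2) ht

lemma Z_mem_weightSubgroup (ht : t ≤ 5 / 2) : Z ∈ weightSubgroup 𝔰 𝔴 t := by
  rw [← commutator_X_Y]
  exact commutator_mem_weightSubgroup 𝔰 𝔴 (i := 0) (j := 1) (by norm_num; linarith)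

lemma weightSubgroup_eq_top (ht : t ≤ 1) : weightSubgroup 𝔰 𝔴 t = ⊤ := by
  refine eq_top_iff.mpr fun ⟨a, b, c⟩ _ => ?_
  rw [mk_eq_X_zpow_mul_Y_zpow_mul_Z_zpow]
  exact mul_mem (mul_mem (zpow_mem (X_mem_weightSubgroup ht) _)
    (zpow_mem (Y_mem_weightSubgroup (by linarith)) _))
    (zpow_mem (Z_mem_weightSubgroup (by linarith)) _)

lemma weightSubgroup_eq_closure_Y_Z (h₁ : 1 < t) (h₂ : t ≤ 3 / 2) :
    weightSubgroup 𝔰 𝔴 t = closure {Y, Z} := by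
  refine le_antisymm (weightSubgroup_le 𝔰 𝔴 (fun i hi => ?_) fun a b _ => ?_) ?_
  · fin_cases i
    · norm_num at hi; linarith
    · exact subset_closure (by simp)
    · exact pow_mem (subset_closure (by simp)) 5
  · exact closure_mono (by simp) (commutator_mem_closure_Z _ _)
  · rw [closure_le]
    rintro _ (rfl | rfl)
    · exact Y_mem_weightSubgroup h₂
    · exact Z_mem_weightSubgroup (by linarith)

lemma weightSubgroup_eq_closure_Z (h₁ : 3 / 2 < t) (h₂ : t ≤ 5 / 2) :
    weightSubgroup 𝔰 𝔴 t = closure {Z} := by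
  refine le_antisymm (weightSubgroup_le 𝔰 𝔴 (fun i hi => ?_) fun a b _ => ?_) ?_
  · fin_cases i
    · norm_num at hi; linarith
    · norm_num at hi; linarith
    · exact pow_mem (subset_closure (Set.mem_singleton Z)) 5
  · exact commutator_mem_closure_Z _ _
  · exact (closure_le _).mpr (Set.singleton_subset_iff.mpr (Z_mem_weightSubgroup h₂))

lemma weightSubgroup_eq_closure_Z_pow_five (h₁ : 5 / 2 < t) (h₂ : t ≤ 3) :
    weightSubgroup 𝔰 𝔴 t = closure {Z ^ 5} := by
  refine le_antisymm (weightSubgroup_le 𝔰 𝔴 (fun i hi => ?_) fun a b hab => ?_) ?_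
  · fin_cases i
    · norm_num at hi; linarith
    · norm_num at hi; linarith
    · exact subset_closure (Set.mem_singleton _)
  · rw [image_comm_eq_one (by linarith)]
    exact one_mem _
  · exact (closure_le _).mpr (Set.singleton_subset_iff.mpr (Z_pow_five_mem_weightSubgroup h₂))

lemma weightSubgroup_eq_bot (ht : 3 < t) : weightSubgroup 𝔰 𝔴 t = ⊥ := by
  refine eq_bot_iff.mpr (weightSubgroup_le 𝔰 𝔴 (fun i hi => ?_) fun a b hab => ?_)
  · fin_cases i <;> norm_num at hi <;> linarith
  · rw [image_comm_eq_one (by linarith)]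
    exact one_mem _

lemma weightSubgroup_three_eq_zpowers : weightSubgroup 𝔰 𝔴 3 = zpowers (Z ^ 5) :=
  (weightSubgroup_eq_closure_Z_pow_five (by norm_num) le_rfl).trans (zpowers_eq_closure _).symm

lemma not_isOfFinOrder_Z_pow_five : ¬IsOfFinOrder (Z ^ 5) :=
  fun h => not_isOfFinOrder_Z (h.of_pow (by norm_num))

lemma exists_surjective_ker_eq_weightSubgroup_three_halves :
    ∃ φ : Heis →* Multiplicative ℤ, Surjective φ ∧ φ.ker = weightSubgroup 𝔰 𝔴 (3 / 2) :=
  ⟨xCoord, xCoord_surjective,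
    ker_xCoord.trans (weightSubgroup_eq_closure_Y_Z (by norm_num) le_rfl).symm⟩

lemma exists_surjective_ker_eq_weightSubgroup_two :
    ∃ φ : weightSubgroup 𝔰 𝔴 (3 / 2) →* Multiplicative ℤ, Surjective φ ∧
      φ.ker = (weightSubgroup 𝔰 𝔴 2).subgroupOf (weightSubgroup 𝔰 𝔴 (3 / 2)) := by
  have h₁ := weightSubgroup_eq_closure_Y_Z (t := 3 / 2) (by norm_num) le_rfl
  have h₂ := weightSubgroup_eq_closure_Z (t := 2) (by norm_num) (by norm_num)
  refine ⟨yCoord.domRestrict _,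
    fun n => ⟨⟨⟨0, n.toAdd, 0⟩, h₁ ▸ mem_closure_Y_Z_iff.mpr rfl⟩, rfl⟩, ?_⟩
  ext ⟨g, hg⟩
  have hx := mem_closure_Y_Z_iff.mp (h₁ ▸ hg)
  simp [mem_subgroupOf, h₂, mem_closure_Z_iff, hx, yCoord]

lemma tfRank_one_three_halves :
    tfRank (weightSubgroup 𝔰 𝔴 1) (weightSubgroup 𝔰 𝔴 (3 / 2)) = 1 := by
  obtain ⟨φ, hφ, hker⟩ := exists_surjective_ker_eq_weightSubgroup_three_halves
  rw [weightSubgroup_eq_top le_rfl]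
  refine tfRank_eq_one_of_surjective (φ.domRestrict ⊤) (fun n => ?_)
    (by rw [MonoidHom.ker_domRestrict, hker])
  obtain ⟨g, rfl⟩ := hφ n
  exact ⟨⟨g, mem_top g⟩, rfl⟩

lemma tfRank_three_halves_two :
    tfRank (weightSubgroup 𝔰 𝔴 (3 / 2)) (weightSubgroup 𝔰 𝔴 2) = 1 := by
  obtain ⟨φ, hφ, hker⟩ := exists_surjective_ker_eq_weightSubgroup_two
  exact tfRank_eq_one_of_surjective φ hφ hker

lemma tfRank_two_five_halves :
    tfRank (weightSubgroup 𝔰 𝔴 2) (weightSubgroup 𝔰 𝔴 (5 / 2)) = 0 := by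
  apply tfRank_eq_zero_of_le
  rw [weightSubgroup_eq_closure_Z (by norm_num) (by norm_num),
    weightSubgroup_eq_closure_Z (by norm_num) le_rfl]

lemma tfRank_five_halves_three :
    tfRank (weightSubgroup 𝔰 𝔴 (5 / 2)) (weightSubgroup 𝔰 𝔴 3) = 0 := by
  refine tfRank_eq_zero_of_zpow_mem (k := 5) (by norm_num) fun g hg => ?_
  rw [weightSubgroup_eq_closure_Z (by norm_num) le_rfl, ← zpowers_eq_closure] at hg
  obtain ⟨n, rfl⟩ := hg
  rw [← zpow_mul, mul_comm, zpow_mul, zpow_ofNat]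
  exact zpow_mem (Z_pow_five_mem_weightSubgroup le_rfl) n

lemma tfRank_three_seven_halves :
    tfRank (weightSubgroup 𝔰 𝔴 3) (weightSubgroup 𝔰 𝔴 (7 / 2)) = 1 := by
  obtain ⟨φ, hinj, hsurj⟩ :=
    exists_bijective_of_eq_zpowers weightSubgroup_three_eq_zpowers not_isOfFinOrder_Z_pow_five
  rw [weightSubgroup_eq_bot (t := 7 / 2) (by norm_num)]
  exact tfRank_eq_one_of_surjective φ hsurj
    (by rw [bot_subgroupOf]; exact (MonoidHom.ker_eq_bot_iff φ).mpr hinj)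

lemma nextVal_one : nextVal 𝔴 1 = 3 / 2 := by
  have := nextVal_half (m := 2) le_rfl
  norm_num at this
  exact this

lemma nextVal_three_halves : nextVal 𝔴 (3 / 2) = 2 := by
  have := nextVal_half (m := 3) (by norm_num)
  norm_num at this
  exact this

lemma nextVal_three : nextVal 𝔴 3 = 7 / 2 := by
  have := nextVal_half (m := 6) (by norm_num)
  norm_num at this
  exact this

lemma tfRank_eq_zero_of_mem_weightVals (ht : t ∈ weightVals 𝔴)
    (hT : t ∉ ({1, 3 / 2, 3} : Finset ℝ)) :
    tfRank (weightSubgroup 𝔰 𝔴 t) (weightSubgroup 𝔰 𝔴 (nextVal 𝔴 t)) = 0 := by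
  obtain ⟨c, rfl⟩ := ht
  obtain ⟨m, hm, hc⟩ := weight_eq_half c
  rw [hc] at hT ⊢
  rw [nextVal_half hm]
  rcases Nat.lt_or_ge m 7 with h | h
  · interval_cases m <;> norm_num at hT
    · norm_num [tfRank_two_five_halves]
    · norm_num [tfRank_five_halves_three]
  · rw [weightSubgroup_eq_bot (by rify at h; linarith)]
    exact tfRank_eq_zero_of_le bot_le

lemma Dval_eq : Dval 𝔰 𝔴 = 11 / 2 := by
  have hT : ∀ t ∈ ({1, 3 / 2, 3} : Finset ℝ), t ∈ weightVals 𝔴 := by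
    simp only [Finset.mem_insert, Finset.mem_singleton]
    rintro t (rfl | rfl | rfl)
    · simpa using half_mem_weightVals 2 le_rfl
    · exact_mod_cast half_mem_weightVals 3 (by norm_num)
    · have := half_mem_weightVals 6 (by norm_num)
      norm_num at this
      exact this
  rw [Dval_eq_sum 𝔰 𝔴 _ hT fun t ht hT => tfRank_eq_zero_of_mem_weightVals ht hT,
    Finset.sum_insert (by norm_num), Finset.sum_insert (by norm_num), Finset.sum_singleton,
    nextVal_one, nextVal_three_halves, nextVal_three, tfRank_one_three_halves,
    tfRank_three_halves_two, tfRank_three_seven_halves]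
  norm_num

end HeisenbergWeightFiltration

open Heis in
/-- The discrete Heisenberg group with generators
`s₁ = X, s₂ = Y, s₃ = Z⁵` and weights `1, 3/2, 3`: the weight filtration is
`G^𝔴(7/2) = {e}`, `G^𝔴(3) = ⟨Z⁵⟩ ≅ ℤ`, `G^𝔴(5/2) = G^𝔴(2) = ⟨Z⟩` (the center),
`G^𝔴(3/2) = ⟨Y,Z⟩`, `G^𝔴(1) = G`; the quotient `G^𝔴(5/2)/G^𝔴(3) ≅ ℤ/5ℤ`, the
quotients at levels `1, 3/2, 3` are infinite cyclic, and
`D(S,𝔴) = 1 + 3/2 + 3 = 11/2`. -/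
theorem statement16 :
    let S : Fin 3 → Heis := ![X, Y, Z ^ 5]
    let w : Fin 3 → ℝ := ![1, 3/2, 3]
    weightSubgroup S w (7/2) = ⊥ ∧
    weightSubgroup S w 3 = Subgroup.closure {Z ^ 5} ∧
    (∃ φ : (weightSubgroup S w 3) →* Multiplicative ℤ, Function.Bijective φ) ∧
    weightSubgroup S w (5/2) = Subgroup.closure {Z} ∧
    weightSubgroup S w 2 = Subgroup.closure {Z} ∧
    weightSubgroup S w (3/2) = Subgroup.closure {Y, Z} ∧
    weightSubgroup S w 1 = ⊤ ∧
    -- `G^𝔴_4/G^𝔴_5 ≅ ℤ/5ℤ`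
    (∃ φ : (weightSubgroup S w (5/2)) →* Multiplicative (ZMod 5),
      Function.Surjective φ ∧
      φ.ker = (weightSubgroup S w 3).subgroupOf (weightSubgroup S w (5/2))) ∧
    -- `G^𝔴_1/G^𝔴_2 ≅ ℤ` and `G^𝔴_2/G^𝔴_3 ≅ ℤ`
    (∃ φ : Heis →* Multiplicative ℤ, Function.Surjective φ ∧
      φ.ker = weightSubgroup S w (3/2)) ∧
    (∃ φ : (weightSubgroup S w (3/2)) →* Multiplicative ℤ, Function.Surjective φ ∧
      φ.ker = (weightSubgroup S w 2).subgroupOf (weightSubgroup S w (3/2))) ∧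
    -- ranks of the successive quotients and the exponent `D(S,𝔴)`
    tfRank (weightSubgroup S w 1) (weightSubgroup S w (3/2)) = 1 ∧
    tfRank (weightSubgroup S w (3/2)) (weightSubgroup S w 2) = 1 ∧
    tfRank (weightSubgroup S w 2) (weightSubgroup S w (5/2)) = 0 ∧
    tfRank (weightSubgroup S w (5/2)) (weightSubgroup S w 3) = 0 ∧
    tfRank (weightSubgroup S w 3) (weightSubgroup S w (7/2)) = 1 ∧
    Dval S w = 11/2 := by
  intro S w
  have h₅₂ : weightSubgroup S w (5 / 2) = zpowers Z :=
    (weightSubgroup_eq_closure_Z (by norm_num) le_rfl).trans (zpowers_eq_closure Z).symm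
  exact ⟨weightSubgroup_eq_bot (by norm_num),
    weightSubgroup_eq_closure_Z_pow_five (by norm_num) le_rfl,
    exists_bijective_of_eq_zpowers weightSubgroup_three_eq_zpowers not_isOfFinOrder_Z_pow_five,
    weightSubgroup_eq_closure_Z (by norm_num) le_rfl,
    weightSubgroup_eq_closure_Z (by norm_num) (by norm_num),
    weightSubgroup_eq_closure_Y_Z (by norm_num) le_rfl,
    weightSubgroup_eq_top le_rfl,
    exists_surjective_zmod_of_eq_zpowers h₅₂ weightSubgroup_three_eq_zpowers not_isOfFinOrder_Z,
    exists_surjective_ker_eq_weightSubgroup_three_halves,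
    exists_surjective_ker_eq_weightSubgroup_two,
    tfRank_one_three_halves, tfRank_three_halves_two, tfRank_two_five_halves,
    tfRank_five_halves_three, tfRank_three_seven_halves, Dval_eq⟩
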